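/- Asymptotic value convergence to the Kelly value: Fix α ∈ (0,1). Then (1/n) · log( sup_{W ∈ W̄} Q_{n,α}(W) ) → Σ_{i=1}^m p_i log(p_i/q_i) as n → ∞ (in particular the supremum is strictly positive for all sufficiently large n). -/

import Mathlib

open Finset Filter Topology
open scoped Classical

noncomputable section

/-- The closed Arrow–Debreu wealth simplex `{W ∈ [0,∞)^m : Σ q_i W_i = 1}`. -/
def closedSimplex {m : ℕ} (q : Fin m → ℝ) : Set (Fin m → ℝ) :=
  {W | (∀ i, 0 ≤ W i) ∧ ∑ i, q i * W i = 1}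

/-- The open Arrow–Debreu wealth simplex `{W ∈ (0,∞)^m : Σ q_i W_i = 1}`. -/
def openSimplex {m : ℕ} (q : Fin m → ℝ) : Set (Fin m → ℝ) :=
  {W | (∀ i, 0 < W i) ∧ ∑ i, q i * W i = 1}

/-- The finite set `C_n` of count vectors `k : Fin m → ℕ` with `Σ k_i = n`. -/
def countFinset (m n : ℕ) : Finset (Fin m → ℕ) :=
  (Fintype.piFinset fun _ : Fin m => Finset.range (n + 1)).filter fun k => ∑ i, k i = n

/-- The monomial `W^k := Π_i W_i^{k_i}` (with the convention `0^0 = 1`). -/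
def mono {m : ℕ} (W : Fin m → ℝ) (k : Fin m → ℕ) : ℝ := ∏ i, W i ^ k i

/-- The multinomial probability `π_k = (n!/(k_1!⋯k_m!))·Π p_i^{k_i}`. -/
def countProb {m : ℕ} (p : Fin m → ℝ) (k : Fin m → ℕ) : ℝ :=
  (Nat.multinomial Finset.univ k : ℝ) * ∏ i, p i ^ k i

/-- The upper α-quantile of terminal wealth
`Q_{n,α}(W) := sup{t ∈ [0,∞) : Σ_{k ∈ C_n : W^k ≥ t} π_k ≥ α}`. -/
def upperQuantile {m : ℕ} (p : Fin m → ℝ) (n : ℕ) (α : ℝ) (W : Fin m → ℝ) : ℝ :=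
  sSup {t : ℝ | 0 ≤ t ∧
    α ≤ ∑ k ∈ countFinset m n, if t ≤ mono W k then countProb p k else 0}

/-- The union of the count hyperplanes `H_{k,ℓ}`. -/
def hyperUnion (m n : ℕ) : Set (Fin m → ℝ) :=
  {u | ∃ k ∈ countFinset m n, ∃ l ∈ countFinset m n,
    k ≠ l ∧ ∑ i, ((k i : ℝ) - (l i : ℝ)) * u i = 0}

/-- A chamber is a connected component of the complement of the count arrangement. -/
def IsChamber (m n : ℕ) (Γ : Set (Fin m → ℝ)) : Prop :=
  ∃ u ∈ (hyperUnion m n)ᶜ, Γ = connectedComponentIn (hyperUnion m n)ᶜ u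

/-- `F_Γ := {W ∈ W⁺⁺ : log W ∈ Γ}`. -/
def chamberFace {m : ℕ} (q : Fin m → ℝ) (Γ : Set (Fin m → ℝ)) : Set (Fin m → ℝ) :=
  {W | W ∈ openSimplex q ∧ (fun i => Real.log (W i)) ∈ Γ}

/-- `k` is the quantile count vector `k_{α,Γ}` of the chamber `Γ`: the tail mass at `W^k`
is at least `α`, while the strict tail mass is below `α`, for every `W ∈ F_Γ`. -/
def IsQuantileVec {m : ℕ} (p q : Fin m → ℝ) (n : ℕ) (α : ℝ) (Γ : Set (Fin m → ℝ))
    (k : Fin m → ℕ) : Prop :=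
  k ∈ countFinset m n ∧
  ∀ W ∈ chamberFace q Γ,
    α ≤ (∑ l ∈ countFinset m n, if mono W k ≤ mono W l then countProb p l else 0) ∧
    (∑ l ∈ countFinset m n, if mono W k < mono W l then countProb p l else 0) < α


/-!
For `0 < λ < 1`, Markov's inequality for `(W^K)^λ` bounds the upper tail at `t` by
`t^{-λ} (Σ p_i W_i^λ)^n`, and Hölder's inequality bounds `Σ p_i W_i^λ` uniformly on the simplex by
`(Σ q_i (p_i/q_i)^r)^{1/r}`, `r = 1/(1-λ)`. Hence `Q_{n,α}(W) ≤ exp(n D_r + O(1))` for every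
`r > 1`, where `D_r = log(Σ q_i (p_i/q_i)^r)/(r-1)` is the Rényi divergence of order `r`.
Conversely, at the Kelly portfolio `W = p/q` a Chernoff bound gives
`P(W^K < e^{nx}) ≤ exp(-n(1-r)(D_r - x))` for `r < 1`, which tends to `0` when `x < D_r`.
Both bounds close up because `D_r` is the slope at `r = 1` of `r ↦ log Σ q_i (p_i/q_i)^r`,
which vanishes there, so `D_r → Σ p_i log(p_i/q_i)` as `r → 1`.
-/

open Real

lemma mem_countFinset {m n : ℕ} {k : Fin m → ℕ} : k ∈ countFinset m n ↔ ∑ i, k i = n := by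
  simp only [countFinset, mem_filter, Fintype.mem_piFinset, mem_range, and_iff_right_iff_imp]
  intro h i
  have := single_le_sum (fun j _ => Nat.zero_le (k j)) (mem_univ i)
  omega

lemma countFinset_eq_piAntidiag (m n : ℕ) : countFinset m n = univ.piAntidiag n := by
  ext k
  simp [mem_countFinset, mem_piAntidiag]

lemma sum_countProb_mul_mono {m : ℕ} (p W : Fin m → ℝ) (n : ℕ) :
    ∑ k ∈ countFinset m n, countProb p k * mono W k = (∑ i, p i * W i) ^ n := by
  rw [countFinset_eq_piAntidiag, sum_pow_eq_sum_piAntidiag]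
  refine sum_congr rfl fun k _ => ?_
  simp only [countProb, mono, mul_pow, prod_mul_distrib]
  ring

lemma sum_countProb {m : ℕ} {p : Fin m → ℝ} (hpsum : ∑ i, p i = 1) (n : ℕ) :
    ∑ k ∈ countFinset m n, countProb p k = 1 := by
  simpa [mono, hpsum] using sum_countProb_mul_mono p (fun _ => 1) n

lemma countProb_nonneg {m : ℕ} {p : Fin m → ℝ} (hp : ∀ i, 0 ≤ p i) (k : Fin m → ℕ) :
    0 ≤ countProb p k :=
  mul_nonneg (Nat.cast_nonneg _) (prod_nonneg fun i _ => pow_nonneg (hp i) _)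

lemma mono_nonneg {m : ℕ} {W : Fin m → ℝ} (hW : ∀ i, 0 ≤ W i) (k : Fin m → ℕ) :
    0 ≤ mono W k :=
  prod_nonneg fun i _ => pow_nonneg (hW i) _

lemma mono_pos {m : ℕ} {W : Fin m → ℝ} (hW : ∀ i, 0 < W i) (k : Fin m → ℕ) : 0 < mono W k :=
  prod_pos fun i _ => pow_pos (hW i) _

lemma mono_rpow {m : ℕ} {W : Fin m → ℝ} (hW : ∀ i, 0 ≤ W i) (k : Fin m → ℕ) (s : ℝ) :
    mono W k ^ s = mono (fun i => W i ^ s) k := by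
  rw [mono, mono, ← finsetProd_rpow _ _ fun i _ => pow_nonneg (hW i) _]
  refine prod_congr rfl fun i _ => ?_
  rw [← rpow_natCast, ← rpow_natCast, ← rpow_mul (hW i), ← rpow_mul (hW i), mul_comm]

lemma sum_ite_le_sum_mul {ι : Type*} (s : Finset ι) (P : ι → Prop) [DecidablePred P]
    {w g : ι → ℝ} (hw : ∀ k ∈ s, 0 ≤ w k) (hg : ∀ k ∈ s, 0 ≤ g k)
    (hP : ∀ k ∈ s, P k → 1 ≤ g k) :
    ∑ k ∈ s, (if P k then w k else 0) ≤ ∑ k ∈ s, w k * g k := by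
  refine sum_le_sum fun k hk => ?_
  split_ifs with h
  · exact le_mul_of_one_le_right (hw k hk) (hP k hk h)
  · exact mul_nonneg (hw k hk) (hg k hk)

section Tails

variable {m : ℕ} (p : Fin m → ℝ) (n : ℕ) (W : Fin m → ℝ)

def upperTail (t : ℝ) : ℝ :=
  ∑ k ∈ countFinset m n, if t ≤ mono W k then countProb p k else 0

def lowerTail (t : ℝ) : ℝ :=
  ∑ k ∈ countFinset m n, if mono W k < t then countProb p k else 0

variable {p W}

lemma upperTail_eq_one_sub_lowerTail (hpsum : ∑ i, p i = 1) (t : ℝ) :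
    upperTail p n W t = 1 - lowerTail p n W t := by
  rw [eq_sub_iff_add_eq, upperTail, lowerTail, ← sum_add_distrib, ← sum_countProb hpsum n]
  refine sum_congr rfl fun k _ => ?_
  by_cases h : t ≤ mono W k
  · simp [h]
  · simp [h, not_le.mp h]

lemma lowerTail_nonneg (hp : ∀ i, 0 ≤ p i) (t : ℝ) : 0 ≤ lowerTail p n W t :=
  sum_nonneg fun k _ => by split_ifs <;> simp [countProb_nonneg hp k]

lemma upperTail_le (hp : ∀ i, 0 ≤ p i) (hW : ∀ i, 0 ≤ W i) {t s : ℝ} (ht : 0 < t)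
    (hs : 0 ≤ s) : upperTail p n W t ≤ t ^ (-s) * (∑ i, p i * W i ^ s) ^ n :=
  calc upperTail p n W t
      ≤ ∑ k ∈ countFinset m n, countProb p k * (mono W k / t) ^ s :=
        sum_ite_le_sum_mul _ _ (fun k _ => countProb_nonneg hp k)
          (fun k _ => rpow_nonneg (div_nonneg (mono_nonneg hW k) ht.le) _)
          fun _ _ hk => one_le_rpow ((one_le_div ht).2 hk) hs
    _ = t ^ (-s) * ∑ k ∈ countFinset m n, countProb p k * mono (fun i => W i ^ s) k := by
        rw [mul_sum]
        refine sum_congr rfl fun k _ => ?_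
        rw [div_rpow (mono_nonneg hW k) ht.le, mono_rpow hW, rpow_neg ht.le]
        ring
    _ = t ^ (-s) * (∑ i, p i * W i ^ s) ^ n := by rw [sum_countProb_mul_mono]

lemma lowerTail_le (hp : ∀ i, 0 ≤ p i) (hW : ∀ i, 0 < W i) {t s : ℝ} (ht : 0 < t)
    (hs : 0 ≤ s) : lowerTail p n W t ≤ t ^ s * (∑ i, p i * W i ^ (-s)) ^ n :=
  calc lowerTail p n W t
      ≤ ∑ k ∈ countFinset m n, countProb p k * (t / mono W k) ^ s :=
        sum_ite_le_sum_mul _ _ (fun k _ => countProb_nonneg hp k)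
          (fun k _ => rpow_nonneg (div_nonneg ht.le (mono_pos hW k).le) _)
          fun k _ hk => one_le_rpow ((one_le_div (mono_pos hW k)).2 hk.le) hs
    _ = t ^ s * ∑ k ∈ countFinset m n, countProb p k * mono (fun i => W i ^ (-s)) k := by
        rw [mul_sum]
        refine sum_congr rfl fun k _ => ?_
        rw [div_rpow ht.le (mono_pos hW k).le, ← mono_rpow fun i => (hW i).le,
          rpow_neg (mono_pos hW k).le]
        ring
    _ = t ^ s * (∑ i, p i * W i ^ (-s)) ^ n := by rw [sum_countProb_mul_mono]

lemma bddAbove_setOf_le_upperTail {α : ℝ} (hα : 0 < α) :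
    BddAbove {t | 0 ≤ t ∧ α ≤ upperTail p n W t} := by
  refine ⟨∑ k ∈ countFinset m n, |mono W k|, fun t ⟨_, htα⟩ => ?_⟩
  obtain ⟨k, hk, htk⟩ : ∃ k ∈ countFinset m n, t ≤ mono W k := by
    by_contra! h
    exact hα.not_ge (htα.trans_eq (sum_eq_zero fun k hk => if_neg (h k hk).not_ge))
  exact htk.trans ((le_abs_self _).trans
    (single_le_sum (f := fun k => |mono W k|) (fun _ _ => abs_nonneg _) hk))

end Tails

section Renyi

variable {ι : Type*} [Fintype ι] {p q : ι → ℝ}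

def renyiSum (p q : ι → ℝ) (r : ℝ) : ℝ := ∑ i, q i * (p i / q i) ^ r

def renyiDiv (p q : ι → ℝ) (r : ℝ) : ℝ := Real.log (renyiSum p q r) / (r - 1)

lemma renyiSum_one (hq : ∀ i, 0 < q i) (hpsum : ∑ i, p i = 1) : renyiSum p q 1 = 1 := by
  simp only [renyiSum, rpow_one, mul_div_cancel₀ _ (hq _).ne', hpsum]

lemma renyiSum_pos (hp : ∀ i, 0 < p i) (hq : ∀ i, 0 < q i) (hpsum : ∑ i, p i = 1) (r : ℝ) :
    0 < renyiSum p q r :=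
  sum_pos (fun i _ => mul_pos (hq i) (rpow_pos_of_pos (div_pos (hp i) (hq i)) r))
    (nonempty_of_sum_ne_zero (hpsum ▸ one_ne_zero))

lemma hasDerivAt_log_renyiSum (hp : ∀ i, 0 < p i) (hq : ∀ i, 0 < q i) (hpsum : ∑ i, p i = 1) :
    HasDerivAt (fun r => Real.log (renyiSum p q r)) (∑ i, p i * Real.log (p i / q i)) 1 := by
  have hsum : HasDerivAt (renyiSum p q)
      (∑ i, q i * ((p i / q i) ^ (1 : ℝ) * Real.log (p i / q i))) 1 :=
    HasDerivAt.fun_sum fun i _ =>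
      ((hasStrictDerivAt_const_rpow (div_pos (hp i) (hq i)) 1).hasDerivAt).const_mul _
  convert hsum.log (by rw [renyiSum_one hq hpsum]; exact one_ne_zero) using 1
  rw [renyiSum_one hq hpsum, div_one]
  refine sum_congr rfl fun i _ => ?_
  rw [rpow_one, ← mul_assoc, mul_div_cancel₀ _ (hq i).ne']

lemma tendsto_renyiDiv (hp : ∀ i, 0 < p i) (hq : ∀ i, 0 < q i) (hpsum : ∑ i, p i = 1) :
    Tendsto (renyiDiv p q) (𝓝[≠] 1) (𝓝 (∑ i, p i * Real.log (p i / q i))) := by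
  convert hasDerivAt_iff_tendsto_slope.mp (hasDerivAt_log_renyiSum hp hq hpsum) using 1
  ext r
  rw [slope_def_field, renyiSum_one hq hpsum, Real.log_one, sub_zero, renyiDiv]

/-- Hölder's inequality with the conjugate exponents `r / (r - 1)` and `r`. -/
lemma sum_mul_rpow_le_renyiSum (hp : ∀ i, 0 ≤ p i) (hq : ∀ i, 0 < q i) {W : ι → ℝ}
    (hW : ∀ i, 0 ≤ W i) (hWq : ∑ i, q i * W i = 1) {r : ℝ} (hr : 1 < r) :
    ∑ i, p i * W i ^ (1 - r⁻¹) ≤ renyiSum p q r ^ r⁻¹ := by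
  have hr0 : 0 < r := one_pos.trans hr
  have hexp : 0 < 1 - r⁻¹ := sub_pos.2 (inv_lt_one_of_one_lt₀ hr)
  have holder := inner_le_Lp_mul_Lq_of_nonneg univ
    (holderConjugate_one_div hexp (inv_pos.2 hr0) (sub_add_cancel 1 r⁻¹))
    (f := fun i => (q i * W i) ^ (1 - r⁻¹)) (g := fun i => p i * q i ^ (r⁻¹ - 1))
    (fun i _ => rpow_nonneg (mul_nonneg (hq i).le (hW i)) _)
    (fun i _ => mul_nonneg (hp i) (rpow_nonneg (hq i).le _))
  have hfg : ∀ i, (q i * W i) ^ (1 - r⁻¹) * (p i * q i ^ (r⁻¹ - 1)) = p i * W i ^ (1 - r⁻¹) := by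
    intro i
    have hqq : q i ^ (1 - r⁻¹) * q i ^ (r⁻¹ - 1) = 1 := by rw [← rpow_add (hq i)]; simp
    rw [mul_rpow (hq i).le (hW i)]
    linear_combination (p i * W i ^ (1 - r⁻¹)) * hqq
  have hf : ∀ i, ((q i * W i) ^ (1 - r⁻¹)) ^ (1 - r⁻¹)⁻¹ = q i * W i := fun i => by
    rw [← rpow_mul (mul_nonneg (hq i).le (hW i)), mul_inv_cancel₀ hexp.ne', rpow_one]
  have hg : ∀ i, (p i * q i ^ (r⁻¹ - 1)) ^ r = q i * (p i / q i) ^ r := fun i => by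
    rw [mul_rpow (hp i) (rpow_nonneg (hq i).le _), ← rpow_mul (hq i).le,
      div_rpow (hp i) (hq i).le, sub_mul, inv_mul_cancel₀ hr0.ne', one_mul, rpow_sub (hq i),
      rpow_one]
    field_simp
  simpa only [renyiSum, one_div, inv_inv, hfg, hf, hg, hWq, one_rpow, one_mul] using holder

end Renyi

section Quantile

variable {m : ℕ} {p q : Fin m → ℝ} {α : ℝ}

lemma kelly_mem_closedSimplex (hp : ∀ i, 0 ≤ p i) (hq : ∀ i, 0 < q i) (hpsum : ∑ i, p i = 1) :
    (fun i => p i / q i) ∈ closedSimplex q :=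
  ⟨fun i => div_nonneg (hp i) (hq i).le, by simpa [mul_div_cancel₀ _ (hq _).ne'] using hpsum⟩

lemma le_exp_renyiDiv_of_le_upperTail (hp : ∀ i, 0 < p i) (hq : ∀ i, 0 < q i)
    (hpsum : ∑ i, p i = 1) (n : ℕ) (hα : 0 < α) {W : Fin m → ℝ} (hW : W ∈ closedSimplex q)
    {r : ℝ} (hr : 1 < r) {t : ℝ} (ht : 0 < t) (htα : α ≤ upperTail p n W t) :
    t ≤ exp (n * renyiDiv p q r - r / (r - 1) * Real.log α) := by
  have hr0 : 0 < r := one_pos.trans hr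
  have hF := renyiSum_pos hp hq hpsum r
  have hmarkov :
      α ≤ exp (-(1 - r⁻¹) * Real.log t + n * (r⁻¹ * Real.log (renyiSum p q r))) :=
    calc α ≤ t ^ (-(1 - r⁻¹)) * (∑ i, p i * W i ^ (1 - r⁻¹)) ^ n :=
          htα.trans (upperTail_le n (fun i => (hp i).le) hW.1 ht
            (sub_nonneg.2 (inv_le_one_of_one_le₀ hr.le)))
      _ ≤ t ^ (-(1 - r⁻¹)) * (renyiSum p q r ^ r⁻¹) ^ n := by
          gcongr
          · exact sum_nonneg fun i _ => mul_nonneg (hp i).le (rpow_nonneg (hW.1 i) _)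
          · exact sum_mul_rpow_le_renyiSum (fun i => (hp i).le) hq hW.1 hW.2 hr
      _ = _ := by
          rw [rpow_def_of_pos ht, rpow_def_of_pos hF, ← exp_nat_mul, ← exp_add]
          ring_nf
  have hlog := (Real.log_le_iff_le_exp hα).2 hmarkov
  have key : (r - 1) * Real.log t ≤ n * Real.log (renyiSum p q r) - r * Real.log α := by
    have h := mul_le_mul_of_nonneg_left hlog hr0.le
    have e : r * (-(1 - r⁻¹) * Real.log t + n * (r⁻¹ * Real.log (renyiSum p q r)))
        = -(r - 1) * Real.log t + n * Real.log (renyiSum p q r) := by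
      field_simp
    linarith
  rw [← exp_log ht, exp_le_exp, renyiDiv, show ∀ a b : ℝ, n * (a / (r - 1)) - r / (r - 1) * b
    = (n * a - r * b) / (r - 1) from fun a b => by ring, le_div_iff₀ (sub_pos.2 hr)]
  linarith

lemma upperQuantile_le_exp_renyiDiv (hp : ∀ i, 0 < p i) (hq : ∀ i, 0 < q i)
    (hpsum : ∑ i, p i = 1) (n : ℕ) (hα : 0 < α) {W : Fin m → ℝ} (hW : W ∈ closedSimplex q)
    {r : ℝ} (hr : 1 < r) :
    upperQuantile p n α W ≤ exp (n * renyiDiv p q r - r / (r - 1) * Real.log α) :=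
  Real.sSup_le (fun _ ⟨ht0, htα⟩ => ht0.eq_or_lt.elim (fun h => h ▸ (exp_pos _).le)
    fun h => le_exp_renyiDiv_of_le_upperTail hp hq hpsum n hα hW hr h htα) (exp_pos _).le

lemma bddAbove_upperQuantile_image (hp : ∀ i, 0 < p i) (hq : ∀ i, 0 < q i)
    (hpsum : ∑ i, p i = 1) (n : ℕ) (hα : 0 < α) :
    BddAbove (upperQuantile p n α '' closedSimplex q) :=
  ⟨_, Set.forall_mem_image.2 fun _ hW =>
    upperQuantile_le_exp_renyiDiv hp hq hpsum n hα hW one_lt_two⟩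

lemma eventually_sSup_upperQuantile_le (hp : ∀ i, 0 < p i) (hq : ∀ i, 0 < q i)
    (hpsum : ∑ i, p i = 1) (hα : 0 < α) {ε : ℝ} (hε : 0 < ε) :
    ∀ᶠ n : ℕ in atTop, sSup (upperQuantile p n α '' closedSimplex q)
      ≤ exp (n * (∑ i, p i * Real.log (p i / q i) + ε)) := by
  obtain ⟨r, hDr, hr⟩ := (((tendsto_renyiDiv hp hq hpsum).mono_left
    (nhdsGT_le_nhdsNE 1)).eventually (gt_mem_nhds (lt_add_of_pos_right _ hε))
    |>.and self_mem_nhdsWithin).exists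
  filter_upwards [(tendsto_natCast_atTop_atTop.atTop_mul_const
    (sub_pos.2 hDr)).eventually_ge_atTop (-(r / (r - 1) * Real.log α))] with n hn
  refine Real.sSup_le (Set.forall_mem_image.2 fun W hW =>
    (upperQuantile_le_exp_renyiDiv hp hq hpsum n hα hW hr).trans (exp_le_exp.2 ?_))
    (exp_pos _).le
  linarith

lemma lowerTail_kelly_le (hp : ∀ i, 0 < p i) (hq : ∀ i, 0 < q i) (n : ℕ) {r : ℝ} (hr : r ≤ 1)
    {t : ℝ} (ht : 0 < t) :
    lowerTail p n (fun i => p i / q i) t ≤ t ^ (1 - r) * renyiSum p q r ^ n := by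
  convert lowerTail_le n (fun i => (hp i).le) (fun i => div_pos (hp i) (hq i)) ht
    (sub_nonneg.2 hr) using 3
  refine sum_congr rfl fun i _ => ?_
  rw [neg_sub, rpow_sub_one (div_pos (hp i) (hq i)).ne']
  field_simp [(hp i).ne', (hq i).ne']

lemma tendsto_lowerTail_kelly (hp : ∀ i, 0 < p i) (hq : ∀ i, 0 < q i) (hpsum : ∑ i, p i = 1)
    {x : ℝ} (hx : x < ∑ i, p i * Real.log (p i / q i)) :
    Tendsto (fun n : ℕ => lowerTail p n (fun i => p i / q i) (exp (n * x))) atTop (𝓝 0) := by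
  obtain ⟨r, hDr, hr⟩ := (((tendsto_renyiDiv hp hq hpsum).mono_left
    (nhdsLT_le_nhdsNE 1)).eventually (lt_mem_nhds hx) |>.and self_mem_nhdsWithin).exists
  have hF := renyiSum_pos hp hq hpsum r
  have hlogF : Real.log (renyiSum p q r) = (r - 1) * renyiDiv p q r := by
    rw [renyiDiv, mul_div_cancel₀ _ (sub_neg.2 hr).ne]
  have hrate : exp ((1 - r) * x) * renyiSum p q r < 1 := by
    rw [← exp_log hF, ← exp_add, exp_lt_one_iff, hlogF]
    nlinarith
  refine squeeze_zero (fun n => lowerTail_nonneg n (fun i => (hp i).le) _) (fun n => ?_)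
    (tendsto_pow_atTop_nhds_zero_of_lt_one (by positivity) hrate)
  refine (lowerTail_kelly_le hp hq n hr.le (exp_pos _)).trans_eq ?_
  rw [mul_pow, ← exp_mul, ← exp_nat_mul]
  ring_nf

lemma eventually_exp_le_sSup_upperQuantile (hp : ∀ i, 0 < p i) (hq : ∀ i, 0 < q i)
    (hpsum : ∑ i, p i = 1) (hα : 0 < α ∧ α < 1) {ε : ℝ} (hε : 0 < ε) :
    ∀ᶠ n : ℕ in atTop, exp (n * (∑ i, p i * Real.log (p i / q i) - ε))
      ≤ sSup (upperQuantile p n α '' closedSimplex q) := by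
  filter_upwards [(tendsto_lowerTail_kelly hp hq hpsum (sub_lt_self _ hε)).eventually
    (gt_mem_nhds (sub_pos.2 hα.2))] with n hn
  refine le_csSup_of_le (bddAbove_upperQuantile_image hp hq hpsum n hα.1)
    (Set.mem_image_of_mem _ (kelly_mem_closedSimplex (fun i => (hp i).le) hq hpsum))
    (le_csSup (bddAbove_setOf_le_upperTail n hα.1) ⟨(exp_pos _).le, ?_⟩)
  change α ≤ upperTail p n _ _
  rw [upperTail_eq_one_sub_lowerTail n hpsum]
  linarith

end Quantile

lemma tendsto_inv_mul_log_of_exp_bounds {s : ℕ → ℝ} {V : ℝ}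
    (h : ∀ ε > 0, ∀ᶠ n : ℕ in atTop, exp (n * (V - ε)) ≤ s n ∧ s n ≤ exp (n * (V + ε))) :
    Tendsto (fun n : ℕ => 1 / (n : ℝ) * Real.log (s n)) atTop (𝓝 V) := by
  refine Metric.tendsto_nhds.2 fun ε hε => ?_
  filter_upwards [h (ε / 2) (half_pos hε), eventually_gt_atTop 0] with n ⟨hlo, hhi⟩ hn
  have hn' : (0 : ℝ) < n := Nat.cast_pos.2 hn
  have hs : 0 < s n := (exp_pos _).trans_le hlo
  have hlo' : V - ε / 2 ≤ Real.log (s n) / n := by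
    rw [le_div_iff₀ hn', mul_comm]
    exact (le_log_iff_exp_le hs).2 hlo
  have hhi' : Real.log (s n) / n ≤ V + ε / 2 := by
    rw [div_le_iff₀ hn', mul_comm]
    exact (log_le_iff_le_exp hs).2 hhi
  rw [one_div_mul_eq_div, Real.dist_eq, abs_sub_lt_iff]
  constructor <;> linarith

theorem asymptotic_value_convergence_general (m : ℕ)
    (p q : Fin m → ℝ) (hp : ∀ i, 0 < p i ∧ p i < 1) (hpsum : ∑ i, p i = 1)
    (hq : ∀ i, 0 < q i) (α : ℝ) (hα : 0 < α ∧ α < 1) :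
    Filter.Tendsto
      (fun n : ℕ => (1 / (n : ℝ)) *
        Real.log (sSup (upperQuantile p n α '' closedSimplex q)))
      Filter.atTop (nhds (∑ i, p i * Real.log (p i / q i))) ∧
    ∃ N : ℕ, ∀ n : ℕ, N ≤ n →
      0 < sSup (upperQuantile p n α '' closedSimplex q) := by
  have hp₀ : ∀ i, 0 < p i := fun i => (hp i).1
  have hlower := fun ε (hε : 0 < ε) => eventually_exp_le_sSup_upperQuantile hp₀ hq hpsum hα hε
  refine ⟨tendsto_inv_mul_log_of_exp_bounds fun ε hε =>
    (hlower ε hε).and (eventually_sSup_upperQuantile_le hp₀ hq hpsum hα.1 hε), ?_⟩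
  obtain ⟨N, hN⟩ := eventually_atTop.1 (hlower 1 one_pos)
  exact ⟨N, fun n hn => (exp_pos _).trans_le (hN n hn)⟩

/-- **Asymptotic value convergence to the Kelly value.**
`(1/n) log(sup_{W ∈ W̄} Q_{n,α}(W)) → Σ p_i log(p_i/q_i)`, and in particular the
supremum is strictly positive for all sufficiently large `n`. -/
theorem asymptotic_value_convergence (m : ℕ) (hm : 2 ≤ m)
    (p q : Fin m → ℝ) (hp : ∀ i, 0 < p i ∧ p i < 1) (hpsum : ∑ i, p i = 1)
    (hq : ∀ i, 0 < q i) (α : ℝ) (hα : 0 < α ∧ α < 1) :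
    Filter.Tendsto
      (fun n : ℕ => (1 / (n : ℝ)) *
        Real.log (sSup (upperQuantile p n α '' closedSimplex q)))
      Filter.atTop (nhds (∑ i, p i * Real.log (p i / q i))) ∧
    ∃ N : ℕ, ∀ n : ℕ, N ≤ n →
      0 < sSup (upperQuantile p n α '' closedSimplex q) :=
  asymptotic_value_convergence_general m p q hp hpsum hq α hα
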